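/- Let C = ⟨(b|0), (ℓ | fh + 2f)⟩ ⊆ R_{α,β} be a Z_2Z_4-additive cyclic code with fhg = x^β - 1, β odd. Then the subcode C_b of C consisting of all codewords of order dividing 2 equals the Z_4[x]-submodule generated by (b|0), (ℓg | 2fg), and (0 | 2fh). -/

import Mathlib

/-!
Write a codeword of `C` as `μ ⋆ (ℓ | fh + 2f)` plus a multiple of `(b | 0)`. Its `Z₄`-part has
order two iff `x^β - 1 = fhg` divides `2μfh`, i.e. (cancelling the monic `fh`) iff `g ∣ 2μ`.
Reducing mod 2 with `g` monic, this says `μ = dg + 2e`. For such `μ`,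
`(dg + 2e)(fh + 2f) ≡ d·2fg + e·2fh (mod fhg)` and `μ ≡ dg (mod 2)` on the binary part, so these
codewords are exactly the combinations of `(b|0)`, `(ℓg | 2fg)` and `(0 | 2fh)`.
-/

open Polynomial

/-- Reduction modulo 2, `Z₄[x] → Z₂[x]`. -/
noncomputable def red42 : Polynomial (ZMod 4) →+* Polynomial (ZMod 2) :=
  Polynomial.mapRingHom (ZMod.castHom (show 2 ∣ 4 by norm_num) (ZMod 2))

/-- The polynomial `∑ uᵢ xⁱ` associated to a binary vector. -/
noncomputable def polyOf2 {α : ℕ} (u : Fin α → ZMod 2) : Polynomial (ZMod 2) :=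
  ∑ i, C (u i) * X ^ (i : ℕ)

/-- The polynomial `∑ u'ⱼ xʲ` associated to a quaternary vector. -/
noncomputable def polyOf4 {β : ℕ} (u : Fin β → ZMod 4) : Polynomial (ZMod 4) :=
  ∑ j, C (u j) * X ^ (j : ℕ)

/-- Membership in the `Z₂Z₄`-additive cyclic code `C = ⟨(b|0), (ℓ|fh+2f)⟩`. -/
def memC {α β : ℕ} (b ℓ : Polynomial (ZMod 2)) (q : Polynomial (ZMod 4))
    (z : (Fin α → ZMod 2) × (Fin β → ZMod 4)) : Prop :=
  ∃ lam mu : Polynomial (ZMod 4),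
    (X ^ α - 1 : Polynomial (ZMod 2)) ∣
        polyOf2 z.1 - (red42 lam * b + red42 mu * ℓ) ∧
    (X ^ β - 1 : Polynomial (ZMod 4)) ∣ polyOf4 z.2 - mu * q

/-- Membership in the `Z₄[x]`-submodule `⟨(b|0), (ℓg|2fg), (0|2fh)⟩`. -/
def memCb {α β : ℕ} (b ℓg : Polynomial (ZMod 2)) (q₂ q₃ : Polynomial (ZMod 4))
    (z : (Fin α → ZMod 2) × (Fin β → ZMod 4)) : Prop :=
  ∃ lam mu nu : Polynomial (ZMod 4),
    (X ^ α - 1 : Polynomial (ZMod 2)) ∣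
        polyOf2 z.1 - (red42 lam * b + red42 mu * ℓg) ∧
    (X ^ β - 1 : Polynomial (ZMod 4)) ∣ polyOf4 z.2 - (mu * q₂ + nu * q₃)

lemma two_mul_two_eq_zero : (2 : (ZMod 4)[X]) * 2 = 0 := by
  rw [← C_ofNat, ← C_mul, show (2 : ZMod 4) * 2 = 0 by decide, C_0]

lemma red42_two : red42 2 = 0 := by
  rw [map_ofNat, ← C_ofNat, show (2 : ZMod 2) = 0 by decide, C_0]

lemma ker_castHom_four_two :
    RingHom.ker (ZMod.castHom (show 2 ∣ 4 by norm_num) (ZMod 2)) = Ideal.span {2} := by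
  ext a
  rw [RingHom.mem_ker, Ideal.mem_span_singleton]
  revert a
  decide

lemma red42_eq_zero_iff {p : (ZMod 4)[X]} : red42 p = 0 ↔ ∃ q, p = 2 * q := by
  rw [← RingHom.mem_ker, red42, ker_mapRingHom, ker_castHom_four_two, Ideal.map_span,
    Set.image_singleton, Ideal.mem_span_singleton', map_ofNat]
  simp only [eq_comm, mul_comm]

lemma two_mul_eq_zero_iff {p : (ZMod 4)[X]} : 2 * p = 0 ↔ red42 p = 0 := by
  constructor
  · intro h
    ext n
    have hn := congrArg (coeff · n) h
    simp only [← C_ofNat, coeff_C_mul, coeff_zero] at hn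
    simp only [red42, coe_mapRingHom, coeff_map, coeff_zero]
    revert hn
    generalize p.coeff n = a
    revert a
    decide
  · intro hp
    obtain ⟨q, rfl⟩ := red42_eq_zero_iff.mp hp
    rw [← mul_assoc, two_mul_two_eq_zero, zero_mul]

lemma exists_eq_mul_add_two_mul_of_dvd_two_mul {g μ : (ZMod 4)[X]} (hg : g.Monic)
    (h : g ∣ 2 * μ) : ∃ d e, μ = d * g + 2 * e := by
  obtain ⟨c, hc⟩ := h
  have hc2 : red42 c = 0 := by
    have := congrArg red42 hc
    have hg2 : (red42 g).Monic := hg.map _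
    rwa [map_mul, map_mul, red42_two, zero_mul, eq_comm, hg2.mul_right_eq_zero_iff] at this
  obtain ⟨d, rfl⟩ := red42_eq_zero_iff.mp hc2
  have : 2 * (μ - d * g) = 0 := by linear_combination hc
  obtain ⟨e, he⟩ := red42_eq_zero_iff.mp (two_mul_eq_zero_iff.mp this)
  exact ⟨d, e, by linear_combination he⟩

lemma coeff_polyOf4 {β : ℕ} (u : Fin β → ZMod 4) (n : ℕ) :
    (polyOf4 u).coeff n = if h : n < β then u ⟨n, h⟩ else 0 := by
  simp only [polyOf4, finsetSum_coeff, coeff_C_mul, coeff_X_pow, mul_ite, mul_one, mul_zero]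
  split
  · next h =>
    rw [Finset.sum_eq_single ⟨n, h⟩ (fun j _ hj => if_neg fun hjn => hj (Fin.ext hjn.symm))
      (by simp)]
    simp
  · next h =>
    exact Finset.sum_eq_zero fun j _ => if_neg fun (hj : n = j) => h (hj ▸ j.isLt)

lemma polyOf4_add {β : ℕ} (u v : Fin β → ZMod 4) :
    polyOf4 (u + v) = polyOf4 u + polyOf4 v := by
  simp only [polyOf4, Pi.add_apply, C_add, add_mul, Finset.sum_add_distrib]

lemma polyOf4_eq_zero_iff {β : ℕ} {u : Fin β → ZMod 4} : polyOf4 u = 0 ↔ u = 0 := by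
  refine ⟨fun h => funext fun j => ?_, fun h => by simp [h, polyOf4]⟩
  simpa [coeff_polyOf4] using congrArg (coeff · j) h

lemma X_pow_sub_one_dvd_polyOf4_iff {β : ℕ} (hβ : 0 < β) {u : Fin β → ZMod 4} :
    (X ^ β - 1 : (ZMod 4)[X]) ∣ polyOf4 u ↔ u = 0 := by
  have : Fact (1 < 4) := ⟨by norm_num⟩
  rw [← polyOf4_eq_zero_iff]
  refine ⟨fun h => by_contra fun h0 => (monic_X_pow_sub_C 1 hβ.ne').not_dvd_of_degree_lt h0 ?_ h,
    fun h => h ▸ dvd_zero _⟩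
  rw [degree_X_pow_sub_C hβ]
  exact degree_sum_fin_lt u

lemma add_self_eq_zero_iff_dvd_two_mul_polyOf4 {α β : ℕ} (hβ : 0 < β)
    (z : (Fin α → ZMod 2) × (Fin β → ZMod 4)) :
    z + z = 0 ↔ (X ^ β - 1 : (ZMod 4)[X]) ∣ 2 * polyOf4 z.2 := by
  rw [two_mul, ← polyOf4_add, X_pow_sub_one_dvd_polyOf4_iff hβ, Prod.ext_iff]
  exact and_iff_right (funext fun i => CharTwo.add_self_eq_zero (z.1 i))

lemma memCb_iff_exists_memC_witness {α β : ℕ} {f g h : (ZMod 4)[X]}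
    (hfac : f * h * g = X ^ β - 1) (b ℓ : (ZMod 2)[X])
    (z : (Fin α → ZMod 2) × (Fin β → ZMod 4)) :
    memCb b (ℓ * red42 g) (2 * f * g) (2 * f * h) z ↔ ∃ lam d e : (ZMod 4)[X],
      (X ^ α - 1 : (ZMod 2)[X]) ∣ polyOf2 z.1 - (red42 lam * b + red42 (d * g + 2 * e) * ℓ) ∧
      (X ^ β - 1 : (ZMod 4)[X]) ∣ polyOf4 z.2 - (d * g + 2 * e) * (f * h + 2 * f) := by
  refine exists_congr fun lam => exists_congr fun d => exists_congr fun e => ?_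
  have hred : red42 (d * g + 2 * e) * ℓ = red42 d * (ℓ * red42 g) := by
    rw [map_add, map_mul, map_mul, red42_two]
    ring
  have hq : polyOf4 z.2 - (d * g + 2 * e) * (f * h + 2 * f) =
      polyOf4 z.2 - (d * (2 * f * g) + e * (2 * f * h)) - d * (X ^ β - 1) := by
    linear_combination -d * hfac - e * f * two_mul_two_eq_zero
  rw [hred, hq, dvd_sub_left (dvd_mul_left _ d)]

theorem order_two_subcode_generators_general (α β : ℕ) (hβ : Odd β)
    (f g h : Polynomial (ZMod 4)) (hf : f.Monic) (hg : g.Monic) (hh : h.Monic)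
    (hfac : f * h * g = X ^ β - 1)
    (b ℓ : Polynomial (ZMod 2)) :
    ∀ z : (Fin α → ZMod 2) × (Fin β → ZMod 4),
      (memC b ℓ (f * h + 2 * f) z ∧ z + z = 0) ↔
        memCb b (ℓ * red42 g) (2 * f * g) (2 * f * h) z := by
  intro z
  rw [memCb_iff_exists_memC_witness hfac, add_self_eq_zero_iff_dvd_two_mul_polyOf4 hβ.pos]
  constructor
  · rintro ⟨⟨lam, μ, h1, h2⟩, hz⟩
    have hμ : f * h * g ∣ f * h * (2 * μ) := by
      rw [hfac]
      convert dvd_sub hz (h2.mul_left 2) using 1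
      linear_combination (-μ * f) * two_mul_two_eq_zero
    obtain ⟨d, e, rfl⟩ := exists_eq_mul_add_two_mul_of_dvd_two_mul hg
      ((hf.mul hh).isRegular.left.dvd_cancel_left.mp hμ)
    exact ⟨lam, d, e, h1, h2⟩
  · rintro ⟨lam, d, e, h1, h2⟩
    refine ⟨⟨lam, _, h1, h2⟩, ?_⟩
    have h2P : 2 * polyOf4 z.2 =
        2 * (polyOf4 z.2 - (d * g + 2 * e) * (f * h + 2 * f)) + 2 * d * (X ^ β - 1) := by
      linear_combination 2 * d * hfac + (d * g * f + e * f * h + 2 * e * f) * two_mul_two_eq_zero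
    rw [h2P]
    exact dvd_add (h2.mul_left 2) (dvd_mul_left _ _)

/-- The subcode `C_b` of all codewords of `C = ⟨(b|0), (ℓ|fh+2f)⟩` of order
dividing two equals `⟨(b|0), (ℓg|2fg), (0|2fh)⟩`. -/
theorem order_two_subcode_generators (α β : ℕ) (hα : 0 < α) (hβ : Odd β)
    (f g h : Polynomial (ZMod 4)) (hf : f.Monic) (hg : g.Monic) (hh : h.Monic)
    (hfac : f * h * g = X ^ β - 1)
    (b ℓ : Polynomial (ZMod 2)) (hb : b ∣ X ^ α - 1) (hℓ : ℓ.degree < b.degree)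
    (hdvd : b ∣ red42 (h * g) * ℓ) :
    ∀ z : (Fin α → ZMod 2) × (Fin β → ZMod 4),
      (memC b ℓ (f * h + 2 * f) z ∧ z + z = 0) ↔
        memCb b (ℓ * red42 g) (2 * f * g) (2 * f * h) z :=
  order_two_subcode_generators_general α β hβ f g h hf hg hh hfac b ℓ
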